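/- arXiv:1007.0533 — 3 statements merged into one kernel-verified Lean document; each statement's English description precedes it below -/
import Mathlib

section
/- Let G be an abelian group and φ : G → G an endomorphism. If φ is locally quasi-periodic, i.e. for every x ∈ G there exist natural numbers n > m with φ^n(x) = φ^m(x), then h(φ) = 0. In particular, the restriction of φ to its hyperkernel ker_∞φ = ⋃_{n≥1} ker φ^n has zero algebraic entropy. -/
open Pointwise

/-- The `n`-th φ-trajectory `T_n(φ,F) = F + φ(F) + ⋯ + φ^{n-1}(F)` of a finite subset `F`. -/
noncomputable def traj {G : Type*} [AddCommGroup G] (φ : AddMonoid.End G) (F : Finset G)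
    (n : ℕ) : Finset G :=
  letI := Classical.decEq G
  ∑ k ∈ Finset.range n, F.image (φ ^ k)

/-- The algebraic entropy of `φ` with respect to `F`:
`H(φ,F) = lim_n log|T_n(φ,F)|/n = inf_{n ≥ 1} log|T_n(φ,F)|/n`. -/
noncomputable def entWith {G : Type*} [AddCommGroup G] (φ : AddMonoid.End G) (F : Finset G) : ℝ :=
  ⨅ n : ℕ, Real.log ((traj φ F (n + 1)).card) / (n + 1)

/-- The algebraic entropy `h(φ) = sup { H(φ,F) : F nonempty finite }`, valued in `[0,∞]`. -/
noncomputable def algEnt {G : Type*} [AddCommGroup G] (φ : AddMonoid.End G) : ENNReal :=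
  ⨆ (F : Finset G) (_ : F.Nonempty), ENNReal.ofReal (entWith φ F)

/-- Restriction of an endomorphism to an invariant subgroup. -/
def restrictEnd {G : Type*} [AddCommGroup G] (φ : AddMonoid.End G) (H : AddSubgroup G)
    (h : ∀ x ∈ H, φ x ∈ H) : AddMonoid.End H :=
  AddMonoidHom.codRestrict ((φ : G →+ G).comp H.subtype) H (fun x => h x x.2)

/-- The hyperkernel `ker_∞φ = ⋃_{n ≥ 1} ker φ^n`. -/
def hyperKer {G : Type*} [AddCommGroup G] (φ : AddMonoid.End G) : AddSubgroup G where
  carrier := {x | ∃ n : ℕ, 0 < n ∧ (φ ^ n) x = 0}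
  zero_mem' := ⟨1, Nat.one_pos, by simp⟩
  add_mem' := by
    rintro a b ⟨n, hn, ha⟩ ⟨m, hm, hb⟩
    refine ⟨n + m, by omega, ?_⟩
    have h1 : (φ ^ (n + m)) a = 0 := by
      have hpow : φ ^ (n + m) = φ ^ m * φ ^ n := by rw [← pow_add, Nat.add_comm]
      calc (φ ^ (n + m)) a = (φ ^ m) ((φ ^ n) a) := by rw [hpow]; rfl
        _ = 0 := by rw [ha]; simp
    have h2 : (φ ^ (n + m)) b = 0 := by
      have hpow : φ ^ (n + m) = φ ^ n * φ ^ m := by rw [← pow_add]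
      calc (φ ^ (n + m)) b = (φ ^ n) ((φ ^ m) b) := by rw [hpow]; rfl
        _ = 0 := by rw [hb]; simp
    rw [map_add, h1, h2, add_zero]
  neg_mem' := by
    rintro a ⟨n, hn, ha⟩
    exact ⟨n, hn, by rw [map_neg, ha, neg_zero]⟩

/-- The hyperkernel is `φ`-invariant. -/
theorem hyperKer_inv {G : Type*} [AddCommGroup G] (φ : AddMonoid.End G) :
    ∀ x ∈ hyperKer φ, φ x ∈ hyperKer φ := by
  rintro x ⟨n, hn, hx⟩
  refine ⟨n, hn, ?_⟩
  have key : (φ ^ n) (φ x) = φ ((φ ^ n) x) := by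
    have h1 : φ ^ n * φ = φ * φ ^ n := by rw [← pow_succ, ← pow_succ']
    show (φ ^ n * φ) x = (φ * φ ^ n) x
    rw [h1]
  rw [key, hx, map_zero]


section Aux
open Pointwise
variable {G : Type*} [AddCommGroup G]

lemma myRepSum [DecidableEq G] (S : Finset G) : ∀ n, ∀ x ∈ ∑ _k ∈ Finset.range n, S,
    ∃ c : G → ℕ, (∀ a, c a ≤ n) ∧ x = ∑ a ∈ S, c a • a := by
  intro n
  induction n with
  | zero =>
    intro x hx
    simp only [Finset.range_zero, Finset.sum_empty, Finset.mem_zero] at hx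
    exact ⟨fun _ => 0, fun a => le_rfl, by simp [hx]⟩
  | succ n ih =>
    intro x hx
    rw [Finset.sum_range_succ, Finset.mem_add] at hx
    obtain ⟨y, hy, a, ha, rfl⟩ := hx
    obtain ⟨c, hc, rfl⟩ := ih y hy
    refine ⟨fun b => c b + if b = a then 1 else 0, fun b => ?_, ?_⟩
    · have := hc b
      simp only
      split <;> omega
    · simp only [add_smul, Finset.sum_add_distrib]
      congr 1
      simp [ite_smul, Finset.sum_ite_eq' S a, ha]

lemma myCardSumLe [DecidableEq G] (S : Finset G) (n : ℕ) :
    (∑ _k ∈ Finset.range n, S).card ≤ (n + 1) ^ S.card := by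
  have hsub : (∑ _k ∈ Finset.range n, S) ⊆
      Finset.image (fun c : ↥S → Fin (n + 1) => ∑ a ∈ S.attach, (c a : ℕ) • (a : G))
        Finset.univ := by
    intro x hx
    obtain ⟨c, hc, rfl⟩ := myRepSum S n x hx
    refine Finset.mem_image.2 ⟨fun a => ⟨c a, Nat.lt_succ_of_le (hc a)⟩, Finset.mem_univ _, ?_⟩
    rw [← Finset.sum_attach S (fun a => c a • a)]
  calc (∑ _k ∈ Finset.range n, S).card ≤ _ := Finset.card_le_card hsub
    _ ≤ Fintype.card (↥S → Fin (n + 1)) := Finset.card_image_le.trans (by simp)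
    _ = (n + 1) ^ S.card := by simp [Fintype.card_coe]

lemma myOrbitBounded (φ : AddMonoid.End G) (x : G) {n m : ℕ} (hmn : m < n)
    (h : (φ ^ n) x = (φ ^ m) x) : ∀ k, ∃ j < n, (φ ^ k) x = (φ ^ j) x := by
  intro k
  induction k using Nat.strong_induction_on with
  | _ k ih =>
    rcases lt_or_ge k n with hk | hk
    · exact ⟨k, hk, rfl⟩
    · have key : (φ ^ k) x = (φ ^ (k - (n - m))) x := by
        have h1 : k = (k - n) + n := by omega
        have h2 : k - (n - m) = (k - n) + m := by omega
        rw [h2, pow_add]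
        conv_lhs => rw [h1, pow_add]
        show (φ ^ (k - n)) ((φ ^ n) x) = (φ ^ (k - n)) ((φ ^ m) x) ; rw [h]
      obtain ⟨j, hj, hj'⟩ := ih (k - (n - m)) (by omega)
      exact ⟨j, hj, key.trans hj'⟩

lemma myTrajSubset [DecidableEq G] (φ : AddMonoid.End G) (F S : Finset G)
    (hS : ∀ k, F.image ⇑(φ ^ k) ⊆ S) (n : ℕ) :
    (∑ k ∈ Finset.range n, F.image (φ ^ k)) ⊆ ∑ _k ∈ Finset.range n, S := by
  induction n with
  | zero => simp
  | succ n ih =>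
    rw [Finset.sum_range_succ, Finset.sum_range_succ]
    exact Finset.add_subset_add ih (hS n)

lemma myTrajNonempty [DecidableEq G] (φ : AddMonoid.End G) (F : Finset G) (hF : F.Nonempty)
    (n : ℕ) : (∑ k ∈ Finset.range n, F.image (φ ^ k)).Nonempty := by
  induction n with
  | zero => simp
  | succ n ih =>
    rw [Finset.sum_range_succ]
    exact ih.add (hF.image _)

lemma myTendsto (s : ℕ) :
    Filter.Tendsto (fun n : ℕ => (s : ℝ) * Real.log ((n : ℝ) + 2) / ((n : ℝ) + 1))
      Filter.atTop (nhds 0) := by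
  have h0 : Filter.Tendsto (fun x : ℝ => Real.log x / x) Filter.atTop (nhds 0) :=
    Real.isLittleO_log_id_atTop.tendsto_div_nhds_zero
  have h1 : Filter.Tendsto (fun n : ℕ => (n : ℝ) + 2) Filter.atTop Filter.atTop :=
    Filter.tendsto_atTop_add_const_right _ 2 tendsto_natCast_atTop_atTop
  have h2 := h0.comp h1
  have h3 : Filter.Tendsto (fun n : ℕ => ((n : ℝ) + 2) / ((n : ℝ) + 1)) Filter.atTop
      (nhds 1) := by
    have := tendsto_one_div_add_atTop_nhds_zero_nat (𝕜 := ℝ)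
    have h4 := this.const_add (1 : ℝ)
    simp only [add_zero] at h4
    refine h4.congr fun n => ?_
    have hne : ((n : ℝ) + 1) ≠ 0 := by positivity
    field_simp
    ring
  have h5 := h2.mul h3
  simp only [mul_one, Function.comp_def] at h5
  have h6 : Filter.Tendsto (fun n : ℕ => Real.log ((n : ℝ) + 2) / ((n : ℝ) + 1))
      Filter.atTop (nhds 0) := by
    refine h5.congr fun n => ?_
    have hne2 : ((n : ℝ) + 2) ≠ 0 := by positivity
    have hne1 : ((n : ℝ) + 1) ≠ 0 := by positivity
    field_simp
  have h7 := h6.const_mul (s : ℝ)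
  simp only [mul_zero] at h7
  refine h7.congr fun n => ?_
  ring

lemma myEntNonpos (φ : AddMonoid.End G) (F : Finset G) (hF : F.Nonempty)
    (hq : ∀ x : G, ∃ n m : ℕ, m < n ∧ (φ ^ n) x = (φ ^ m) x) : entWith φ F ≤ 0 := by
  classical
  choose nn mm hmn hper using hq
  set N := F.sup nn with hN
  set S := F.biUnion (fun x => (Finset.range N).image fun j => (φ ^ j) x) with hSdef
  have hS : ∀ k, F.image ⇑(φ ^ k) ⊆ S := by
    intro k y hy
    obtain ⟨x, hx, rfl⟩ := Finset.mem_image.1 hy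
    obtain ⟨j, hj, hjeq⟩ := myOrbitBounded φ x (hmn x) (hper x) k
    refine Finset.mem_biUnion.2 ⟨x, hx, Finset.mem_image.2 ⟨j, ?_, hjeq.symm⟩⟩
    exact Finset.mem_range.2 (lt_of_lt_of_le hj (Finset.le_sup hx))
  have hcard : ∀ n : ℕ, (traj φ F n).card ≤ (n + 1) ^ S.card := by
    intro n
    have h1 : traj φ F n ⊆ ∑ _k ∈ Finset.range n, S := myTrajSubset φ F S hS n
    exact (Finset.card_le_card h1).trans (myCardSumLe S n)
  have hpos : ∀ n : ℕ, 0 < (traj φ F n).card := by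
    intro n
    exact Finset.card_pos.2 (myTrajNonempty φ F hF n)
  have hbdd : BddBelow (Set.range fun n : ℕ =>
      Real.log ((traj φ F (n + 1)).card) / ((n : ℝ) + 1)) := by
    refine ⟨0, ?_⟩
    rintro _ ⟨n, rfl⟩
    have h1 : (1 : ℝ) ≤ ((traj φ F (n + 1)).card : ℝ) := by
      exact_mod_cast hpos (n + 1)
    have := Real.log_nonneg h1
    positivity
  rw [entWith]
  by_contra hcon
  push_neg at hcon
  obtain ⟨n, hn⟩ := ((myTendsto S.card).eventually (gt_mem_nhds hcon)).exists
  have hterm : Real.log ((traj φ F (n + 1)).card) / ((n : ℝ) + 1) ≤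
      (S.card : ℝ) * Real.log ((n : ℝ) + 2) / ((n : ℝ) + 1) := by
    apply div_le_div_of_nonneg_right ?_ (by positivity) |>.trans_eq rfl
    calc Real.log ((traj φ F (n + 1)).card)
        ≤ Real.log (((n + 2 : ℕ) : ℝ) ^ S.card) := by
          apply Real.log_le_log (by exact_mod_cast hpos (n + 1))
          exact_mod_cast hcard (n + 1)
      _ = (S.card : ℝ) * Real.log ((n : ℝ) + 2) := by
          rw [Real.log_pow]
          norm_num
  have hle := ciInf_le hbdd n
  exact absurd (hle.trans hterm) (not_le.2 hn)

lemma myAlgEntZero (φ : AddMonoid.End G)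
    (hq : ∀ x : G, ∃ n m : ℕ, m < n ∧ (φ ^ n) x = (φ ^ m) x) : algEnt φ = 0 := by
  refine le_antisymm ?_ (zero_le)
  refine iSup_le fun F => iSup_le fun hF => ?_
  rw [ENNReal.ofReal_eq_zero.2 (myEntNonpos φ F hF hq)]

lemma myRestrictPow (φ : AddMonoid.End G) (H : AddSubgroup G) (h : ∀ x ∈ H, φ x ∈ H) :
    ∀ (k : ℕ) (x : H), (((restrictEnd φ H h ^ k) x : H) : G) = (φ ^ k) (x : G) := by
  intro k
  induction k with
  | zero => intro x; rfl
  | succ k ih =>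
    intro x
    rw [pow_succ', pow_succ']
    show ((restrictEnd φ H h ((restrictEnd φ H h ^ k) x) : H) : G) = φ ((φ ^ k) (x : G))
    rw [← ih x]; rfl

end Aux

/-- If `φ` is locally quasi-periodic then `h(φ) = 0`; in particular the restriction of `φ`
to its hyperkernel has zero algebraic entropy. -/
theorem stmt1 {G : Type*} [AddCommGroup G] (φ : AddMonoid.End G) :
    ((∀ x : G, ∃ n m : ℕ, m < n ∧ (φ ^ n) x = (φ ^ m) x) → algEnt φ = 0) ∧
    algEnt (restrictEnd φ (hyperKer φ) (hyperKer_inv φ)) = 0 := by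
  constructor
  · exact myAlgEntZero φ
  · apply myAlgEntZero
    rintro ⟨x, hx⟩
    obtain ⟨n, hn, hxn⟩ := hx
    refine ⟨n + 1, n, Nat.lt_succ_self n, ?_⟩
    apply Subtype.ext
    rw [myRestrictPow, myRestrictPow]
    show (φ ^ (n + 1)) x = (φ ^ n) x
    rw [hxn, pow_succ']
    show φ ((φ ^ n) x) = 0
    rw [hxn, map_zero]
end

section
/- Let G be an abelian group, φ : G → G an endomorphism, H a φ-invariant subgroup of G (φ(H) ⊆ H), and φ̄ : G/H → G/H the endomorphism induced by φ on the quotient. Then h(φ) ≥ max{ h(φ↾_H), h(φ̄) }. -/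
open Pointwise

/-- The endomorphism induced on the quotient by an invariant subgroup. -/
def quotEnd {G : Type*} [AddCommGroup G] (φ : AddMonoid.End G) (H : AddSubgroup G)
    (h : ∀ x ∈ H, φ x ∈ H) : AddMonoid.End (G ⧸ H) :=
  QuotientAddGroup.map H H (φ : G →+ G) h


lemma traj_nonempty {G : Type*} [AddCommGroup G] (φ : AddMonoid.End G) {F : Finset G}
    (hF : F.Nonempty) (n : ℕ) : (traj φ F n).Nonempty := by
  letI := Classical.decEq G
  induction n with
  | zero => exact ⟨0, by simp [traj]⟩
  | succ n ih =>
    unfold traj at *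
    rw [Finset.sum_range_succ]
    exact ih.add (hF.image _)

lemma traj_image {G G' : Type*} [AddCommGroup G] [AddCommGroup G']
    (φ : AddMonoid.End G) (ψ : AddMonoid.End G') (f : G →+ G')
    (hc : ∀ x, f (φ x) = ψ (f x)) (F : Finset G) (n : ℕ) :
    traj ψ (letI := Classical.decEq G'; F.image f) n
      = (letI := Classical.decEq G'; (traj φ F n).image f) := by
  letI := Classical.decEq G
  letI := Classical.decEq G'
  have hpow : ∀ k x, f ((φ ^ k) x) = (ψ ^ k) (f x) := by
    intro k
    induction k with
    | zero => simp
    | succ k ih =>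
      intro x
      rw [pow_succ, pow_succ]
      show f ((φ ^ k) (φ x)) = (ψ ^ k) (ψ (f x))
      rw [ih, hc]
  induction n with
  | zero =>
    show (0 : Finset G') = Finset.image f 0
    show ({0} : Finset G') = Finset.image f {0}
    simp
  | succ n ih =>
    unfold traj at *
    rw [Finset.sum_range_succ, Finset.sum_range_succ, ih, Finset.image_add,
      Finset.image_image, Finset.image_image]
    congr 1
    have h2 : ⇑(ψ ^ n) ∘ ⇑f = ⇑f ∘ ⇑(φ ^ n) := funext fun x => (hpow n x).symm
    rw [h2]

lemma entWith_le_of_card_le {G G' : Type*} [AddCommGroup G] [AddCommGroup G']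
    (φ : AddMonoid.End G) (ψ : AddMonoid.End G') {F : Finset G} {F' : Finset G'}
    (hne' : F'.Nonempty)
    (hcard : ∀ n, (traj ψ F' n).card ≤ (traj φ F n).card) :
    entWith ψ F' ≤ entWith φ F := by
  have hpos : ∀ n : ℕ, 0 < ((traj ψ F' (n + 1)).card : ℝ) := fun n => by
    exact_mod_cast (traj_nonempty ψ hne' (n + 1)).card_pos
  apply ciInf_mono
  · refine ⟨0, ?_⟩
    rintro x ⟨n, rfl⟩
    have h1 : (1 : ℝ) ≤ ((traj ψ F' (n + 1)).card : ℝ) := by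
      exact_mod_cast (traj_nonempty ψ hne' (n + 1)).card_pos
    have := Real.log_nonneg h1
    positivity
  · intro n
    gcongr
    · exact hpos n
    · exact_mod_cast hcard (n + 1)

/-- Monotonicity of algebraic entropy under restrictions to invariant subgroups and
induced endomorphisms on quotients: `h(φ) ≥ max{h(φ↾_H), h(φ̄)}`. -/
theorem stmt2 {G : Type*} [AddCommGroup G] (φ : AddMonoid.End G) (H : AddSubgroup G)
    (hinv : ∀ x ∈ H, φ x ∈ H) :
    max (algEnt (restrictEnd φ H hinv)) (algEnt (quotEnd φ H hinv)) ≤ algEnt φ := by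
  apply max_le
  · refine iSup₂_le fun F hF => ?_
    letI := Classical.decEq G
    have hc : ∀ x : H, H.subtype ((restrictEnd φ H hinv) x) = φ (H.subtype x) := fun x => rfl
    have him := traj_image (restrictEnd φ H hinv) φ H.subtype hc F
    have hcard : ∀ n, (traj (restrictEnd φ H hinv) F n).card
        ≤ (traj φ (F.image H.subtype) n).card := by
      intro n
      rw [him n, Finset.card_image_of_injective _ H.subtype_injective]
    refine le_trans (ENNReal.ofReal_le_ofReal
      (entWith_le_of_card_le φ (restrictEnd φ H hinv) hF hcard)) ?_
    exact le_iSup₂ (f := fun F _ => ENNReal.ofReal (entWith φ F)) (F.image H.subtype)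
      (hF.image _)
  · refine iSup₂_le fun F hF => ?_
    letI := Classical.decEq G
    letI := Classical.decEq (G ⧸ H)
    set F' : Finset G := F.image Quotient.out with hF'
    have hmk : F'.image (QuotientAddGroup.mk' H) = F := by
      rw [hF', Finset.image_image]
      ext y
      simp [Quotient.out_eq']
    have hc : ∀ x, (QuotientAddGroup.mk' H) (φ x)
        = (quotEnd φ H hinv) ((QuotientAddGroup.mk' H) x) := fun x => rfl
    have him := traj_image φ (quotEnd φ H hinv) (QuotientAddGroup.mk' H) hc F'
    have hcard : ∀ n, (traj (quotEnd φ H hinv) F n).card ≤ (traj φ F' n).card := by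
      intro n
      rw [← hmk, him n]
      exact Finset.card_image_le
    have hne' : F'.Nonempty := hF.image _
    refine le_trans (ENNReal.ofReal_le_ofReal
      (entWith_le_of_card_le φ (quotEnd φ H hinv) hF hcard)) ?_
    exact le_iSup₂ (f := fun F _ => ENNReal.ofReal (entWith φ F)) F' hne'
end

section
/- Let G be a torsion-free abelian group and φ : G → G an endomorphism. Suppose G = V(φ,g) for some g ∈ G, i.e. G is generated as a group by {φ^n(g) : n ∈ ℕ}. If h(φ) < ∞, then G has finite torsion-free rank. -/
open Pointwise

private lemma sum_mem_finset_sum {G : Type*} [AddCommGroup G] [DecidableEq G]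
    {ι : Type*} (s : Finset ι) (A : ι → Finset G) (x : ι → G)
    (h : ∀ k ∈ s, x k ∈ A k) : (∑ k ∈ s, x k) ∈ ∑ k ∈ s, A k := by
  classical
  induction s using Finset.cons_induction with
  | empty => simp
  | cons a s ha ih =>
    rw [Finset.sum_cons, Finset.sum_cons]
    exact Finset.add_mem_add (h a (Finset.mem_cons_self a s))
      (ih fun k hk => h k (Finset.mem_cons_of_mem hk))

/-- Case A: if the orbit of `g` is linearly independent over `ℤ`, the entropy is infinite. -/
private lemma algEnt_eq_top {G : Type*} [AddCommGroup G] (φ : AddMonoid.End G) (g : G)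
    (hli : LinearIndependent ℤ fun k : ℕ => (φ ^ k) g) (m : ℕ) :
    ENNReal.ofReal (Real.log (m + 1)) ≤ algEnt φ := by
  classical
  set v : ℕ → G := fun k => (φ ^ k) g with hv
  set F : Finset G := (Finset.range (m + 1)).image (fun i : ℕ => i • g) with hF
  have hFne : F.Nonempty := ⟨0 • g, Finset.mem_image.2 ⟨0, by simp, rfl⟩⟩
  -- lower bound on the cardinality of the trajectory
  have hcard : ∀ n : ℕ, ((m + 1) ^ (n + 1) : ℕ) ≤ (traj φ F (n + 1)).card := by
    intro n
    have hinj : Set.InjOn (fun c : Fin (n + 1) → Fin (m + 1) =>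
        ∑ k : Fin (n + 1), ((c k : ℕ)) • v k) (Finset.univ : Finset (Fin (n+1) → Fin (m+1))) := by
      intro c _ d _ hcd
      have hli' : LinearIndependent ℤ fun k : Fin (n + 1) => v (k : ℕ) :=
        hli.comp (fun k : Fin (n+1) => (k : ℕ)) Fin.val_injective
      rw [Fintype.linearIndependent_iff] at hli'
      have hz : ∑ k : Fin (n + 1), (((c k : ℕ) : ℤ) - ((d k : ℕ) : ℤ)) • v (k : ℕ) = 0 := by
        simp only [sub_smul, Finset.sum_sub_distrib, natCast_zsmul]
        rw [sub_eq_zero]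
        exact hcd
      have hck := hli' _ hz
      funext k
      have : ((c k : ℕ) : ℤ) = ((d k : ℕ) : ℤ) := sub_eq_zero.mp (hck k)
      exact Fin.ext (by exact_mod_cast this)
    have hmem : ∀ c : Fin (n + 1) → Fin (m + 1),
        (∑ k : Fin (n + 1), ((c k : ℕ)) • v k) ∈ traj φ F (n + 1) := by
      intro c
      unfold traj
      rw [← Fin.sum_univ_eq_sum_range (fun k => F.image (φ ^ k))]
      refine sum_mem_finset_sum _ _ _ fun k _ => ?_
      refine Finset.mem_image.2 ⟨(c k : ℕ) • g, Finset.mem_image.2 ⟨(c k : ℕ), ?_, rfl⟩, ?_⟩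
      · exact Finset.mem_range.2 (c k).isLt
      · exact map_nsmul (φ ^ (k : ℕ)) _ g
    calc ((m + 1) ^ (n + 1) : ℕ) = (Finset.univ : Finset (Fin (n+1) → Fin (m+1))).card := by
          simp [Fintype.card_fun]
      _ ≤ (traj φ F (n + 1)).card :=
          Finset.card_le_card_of_injOn _ (fun c _ => hmem c) hinj
  -- lower bound on entWith
  have hent : Real.log (m + 1) ≤ entWith φ F := by
    refine le_ciInf fun n => ?_
    rw [le_div_iff₀ (by positivity)]
    have h1 : Real.log (((m + 1) ^ (n + 1) : ℕ) : ℝ) ≤ Real.log ((traj φ F (n+1)).card) := by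
      apply Real.log_le_log (by positivity)
      exact_mod_cast hcard n
    have h0 : Real.log (((m + 1) ^ (n + 1) : ℕ) : ℝ) = Real.log (m + 1) * (n + 1) := by
      push_cast
      rw [Real.log_pow]
      push_cast
      ring
    rw [← h0]
    exact h1
  calc ENNReal.ofReal (Real.log (m + 1)) ≤ ENNReal.ofReal (entWith φ F) :=
        ENNReal.ofReal_le_ofReal hent
    _ ≤ algEnt φ := le_iSup₂ (f := fun (F : Finset G) (_ : F.Nonempty) =>
        ENNReal.ofReal (entWith φ F)) F hFne

/-- The "saturation" of a submodule: elements with a nonzero integer multiple in `W`. -/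
private def satSub {G : Type*} [AddCommGroup G] (W : Submodule ℤ G) : Submodule ℤ G where
  carrier := {x | ∃ N : ℤ, N ≠ 0 ∧ N • x ∈ W}
  add_mem' := by
    rintro x y ⟨N, hN, hNx⟩ ⟨M, hM, hMy⟩
    refine ⟨N * M, mul_ne_zero hN hM, ?_⟩
    rw [smul_add]
    refine add_mem ?_ ?_
    · rw [mul_comm, mul_smul]
      exact Submodule.smul_mem _ _ hNx
    · rw [mul_smul]
      exact Submodule.smul_mem _ _ hMy
  zero_mem' := ⟨1, one_ne_zero, by simp⟩
  smul_mem' := by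
    rintro z x ⟨N, hN, hNx⟩
    exact ⟨N, hN, by rw [smul_comm]; exact Submodule.smul_mem _ _ hNx⟩

private lemma mem_satSub {G : Type*} [AddCommGroup G] {W : Submodule ℤ G} {x : G} :
    x ∈ satSub W ↔ ∃ N : ℤ, N ≠ 0 ∧ N • x ∈ W := Iff.rfl

/-- If `G` is torsion-free, `G = V(φ,g)` is generated by the `φ`-orbit of some `g`, and
`h(φ) < ∞`, then `G` has finite torsion-free rank. -/
theorem stmt8 {G : Type*} [AddCommGroup G] (φ : AddMonoid.End G)
    (htf : ∀ x : G, x ≠ 0 → ∀ n : ℕ, 0 < n → n • x ≠ 0)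
    (g : G) (hgen : AddSubgroup.closure (Set.range fun n : ℕ => (φ ^ n) g) = ⊤)
    (hfin : algEnt φ ≠ ⊤) :
    Module.rank ℤ G < Cardinal.aleph0 := by
  classical
  set v : ℕ → G := fun k => (φ ^ k) g with hv
  by_cases hli : LinearIndependent ℤ v
  · -- entropy would be infinite
    exfalso
    set m : ℕ := ⌈Real.exp (algEnt φ).toReal⌉₊ with hm
    have h1 := algEnt_eq_top φ g hli m
    have h2 : Real.log (m + 1) ≤ (algEnt φ).toReal :=
      (ENNReal.ofReal_le_iff_le_toReal hfin).1 h1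
    have h3 : (algEnt φ).toReal < Real.log (m + 1) := by
      rw [Real.lt_log_iff_exp_lt (by positivity)]
      calc Real.exp (algEnt φ).toReal ≤ (m : ℝ) := Nat.le_ceil _
        _ < m + 1 := by linarith
    linarith
  · -- get a relation with top coefficient
    rw [linearIndependent_iff'] at hli
    push_neg at hli
    obtain ⟨s, c, hsum, i₀, hi₀s, hi₀⟩ := hli
    have hSne : (s.filter (fun i => c i ≠ 0)).Nonempty := ⟨i₀, Finset.mem_filter.2 ⟨hi₀s, hi₀⟩⟩
    set n : ℕ := (s.filter (fun i => c i ≠ 0)).max' hSne with hn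
    have hcn : c n ≠ 0 := (Finset.mem_filter.1 ((s.filter _).max'_mem hSne)).2
    have hns : n ∈ s := (Finset.mem_filter.1 ((s.filter _).max'_mem hSne)).1
    have hmax : ∀ i ∈ s, c i ≠ 0 → i ≤ n := fun i hi hci =>
      Finset.le_max' _ i (Finset.mem_filter.2 ⟨hi, hci⟩)
    set W : Submodule ℤ G := Submodule.span ℤ ↑((Finset.range n).image v) with hW
    -- the relation: c n • v n ∈ W
    have hrel : c n • v n ∈ W := by
      have hsplit : ∑ i ∈ s.erase n, c i • v i + c n • v n = 0 := by
        rw [Finset.sum_erase_add s _ hns]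
        exact hsum
      have heq : c n • v n = -∑ i ∈ s.erase n, c i • v i := by
        rw [eq_neg_iff_add_eq_zero, add_comm]
        exact hsplit
      rw [heq]
      refine neg_mem (Submodule.sum_mem _ fun i hi => ?_)
      by_cases hci : c i = 0
      · simp [hci]
      · refine Submodule.smul_mem _ _ (Submodule.subset_span ?_)
        have hin : i < n := lt_of_le_of_ne (hmax i (Finset.mem_of_mem_erase hi) hci)
          (Finset.ne_of_mem_erase hi)
        exact Finset.mem_coe.2 (Finset.mem_image.2 ⟨i, Finset.mem_range.2 hin, rfl⟩)
    set S : Submodule ℤ G := satSub W with hS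
    -- every orbit element is in S
    have horb : ∀ m : ℕ, v m ∈ S := by
      intro m
      induction m using Nat.strong_induction_on with
      | _ m ih =>
        by_cases hm : m < n
        · refine mem_satSub.2 ⟨1, one_ne_zero, ?_⟩
          rw [one_smul]
          exact Submodule.subset_span
            (Finset.mem_coe.2 (Finset.mem_image.2 ⟨m, Finset.mem_range.2 hm, rfl⟩))
        · push_neg at hm
          set d : ℕ := m - n with hd
          have hmd : m = n + d := by omega
          set ψ : G →ₗ[ℤ] G := ((φ ^ d : AddMonoid.End G) : G →+ G).toIntLinearMap with hψ
          have hψv : ∀ k, ψ (v k) = v (k + d) := by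
            intro k
            show (φ ^ d) ((φ ^ k) g) = (φ ^ (k + d)) g
            rw [add_comm k d, pow_add]
            rfl
          -- c n • v m  is in the span of { v (k + d) : k < n }, all of which are in S
          have h1 : c n • v m ∈ Submodule.map ψ W := by
            refine ⟨c n • v n, hrel, ?_⟩
            rw [map_smul, hψv, ← hmd]
          have h2 : Submodule.map ψ W ≤ S := by
            rw [hW, Submodule.map_span, Submodule.span_le]
            rintro _ ⟨_, hx, rfl⟩
            obtain ⟨k, hk, rfl⟩ := Finset.mem_image.1 (Finset.mem_coe.1 hx)
            rw [hψv]
            have := Finset.mem_range.1 hk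
            exact ih (k + d) (by omega)
          obtain ⟨N, hN, hNW⟩ := mem_satSub.1 (h2 h1)
          exact mem_satSub.2 ⟨N * c n, mul_ne_zero hN hcn, by rwa [mul_smul]⟩
    -- hence S = ⊤
    have hStop : ∀ x : G, ∃ N : ℤ, N ≠ 0 ∧ N • x ∈ W := by
      have htop : (⊤ : AddSubgroup G) ≤ S.toAddSubgroup := by
        rw [← hgen]
        exact (AddSubgroup.closure_le _).2 (by rintro _ ⟨m, rfl⟩; exact horb m)
      intro x
      exact mem_satSub.1 (htop (AddSubgroup.mem_top x))
    -- rank bound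
    have hrank : Module.rank ℤ G ≤ (n : Cardinal) := by
      apply rank_le
      intro t ht
      choose N hN hNW using fun x : G => hStop x
      -- the scaled family is linearly independent and lives in W
      have hli2 : LinearIndependent ℤ (fun i : t => N (i : G) • (i : G)) := by
        rw [Fintype.linearIndependent_iff] at ht ⊢
        intro a ha i
        have := ht (fun j => a j * N (j : G)) (by
          simpa only [mul_smul] using ha) i
        exact (mul_eq_zero.1 this).resolve_right (hN _)
      have hli3 : LinearIndependent ℤ (fun i : t => (⟨N (i : G) • (i : G), hNW _⟩ : W)) :=
        hli2.of_comp W.subtype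
      have hWrank : Module.rank ℤ W ≤ (n : Cardinal) := by
        refine (rank_span_le _).trans ?_
        refine le_trans (le_of_eq Cardinal.mk_coe_finset) ?_
        exact_mod_cast (Finset.card_image_le).trans (by simp)
      have h4 := hli3.cardinal_le_rank.trans hWrank
      rw [Cardinal.mk_coe_finset] at h4
      exact_mod_cast h4
    exact lt_of_le_of_lt hrank (Cardinal.nat_lt_aleph0 n)
end
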